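/- arXiv:2312.17626 — 3 statements merged into one kernel-verified Lean document; each statement's English description precedes it below -/
import Mathlib

section
/- Let G be a tree graph and (r1,r2) an edge of G; removing this edge yields subtrees G1 (containing r1) and G2 (containing r2). Let M, M1, M2 be MECs of G, G1, G2 respectively. Then P(M, V_{G1}, V_{G2}) = (M1, M2) if and only if (1) every v-structure of M1 and every v-structure of M2 is a v-structure of M, and (2) either every v-structure of M that is a v-structure of neither M1 nor M2 contains the directed edge r1→r2, or every v-structure of M that is a v-structure of neither M1 nor M2 contains the directed edge r2→r1. -/
/-! Common definitions: mixed graphs, Markov equivalence classes (MECs),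
partial MECs, projections, extensions, and counting classes. -/

/-- A mixed graph on a vertex type `V`: an irreflexive edge relation. -/
structure MixedGraph (V : Type*) where
  E : V → V → Prop
  irrefl : ∀ v, ¬ E v v

namespace MixedGraph

variable {V : Type*}

/-- `u — v` : undirected edge of `M`. -/
def undirE (M : MixedGraph V) (u v : V) : Prop := M.E u v ∧ M.E v u

/-- `u → v` : directed edge of `M`. -/
def dirE (M : MixedGraph V) (u v : V) : Prop := M.E u v ∧ ¬ M.E v u

/-- `u` and `v` are adjacent in `M` (joined by some edge). -/
def adjE (M : MixedGraph V) (u v : V) : Prop := M.E u v ∨ M.E v u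

/-- The skeleton of a mixed graph: replace every directed edge by an undirected one. -/
def skeleton (M : MixedGraph V) : SimpleGraph V where
  Adj u v := M.adjE u v
  symm := by
    constructor
    intro u v h
    exact Or.symm h
  loopless := by
    constructor
    intro v h
    rcases h with h | h <;> exact M.irrefl v h

/-- The undirected part of a mixed graph, as a simple graph. -/
def undirGraph (M : MixedGraph V) : SimpleGraph V where
  Adj u v := M.undirE u v
  symm := by
    constructor
    intro u v h
    exact ⟨h.2, h.1⟩
  loopless := by
    constructor
    intro v h
    exact M.irrefl v h.1

/-- `M` is a chain graph: no directed cycle, i.e. no cycle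
`u_1, …, u_l, u_1` (`l ≥ 2`, vertices distinct) in which every consecutive pair is joined
by an undirected or forward-directed edge and at least one edge is directed. -/
def IsChainGraph (M : MixedGraph V) : Prop :=
  ∀ (l : ℕ) (f : ZMod l → V), 2 ≤ l → Function.Injective f →
    (∀ i, M.E (f i) (f (i + 1))) → ∀ i, ¬ M.dirE (f i) (f (i + 1))

/-- `a → b ← c` is a v-structure of `M` (in particular `a`, `c` non-adjacent). -/
def vstruct (M : MixedGraph V) (a b c : V) : Prop :=
  M.dirE a b ∧ M.dirE c b ∧ ¬ M.adjE a c

/-- The set of v-structures of `M`, as ordered triples `(a, b, c)` with `a → b ← c`. -/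
def vstructs (M : MixedGraph V) : Set (V × V × V) :=
  {t | M.vstruct t.1 t.2.1 t.2.2}

/-- The directed edge `u → v` is strongly protected in `M`: it occurs in an induced
subgraph of one of the four forms (a) `w→u→v` (`w`,`v` non-adjacent);
(b) `u→v←w` (`u`,`w` non-adjacent); (c) `u→w`, `w→v`, `u→v`;
(d) `w→v`, `w'→v`, `w—u`, `w'—u`, `u→v` (`w`,`w'` non-adjacent). -/
def StronglyProtected (M : MixedGraph V) (u v : V) : Prop :=
  (∃ w, M.dirE w u ∧ ¬ M.adjE w v) ∨
  (∃ w, M.dirE w v ∧ ¬ M.adjE u w) ∨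
  (∃ w, M.dirE u w ∧ M.dirE w v) ∨
  (∃ w w', w ≠ w' ∧ M.undirE w u ∧ M.undirE w' u ∧ M.dirE w v ∧ M.dirE w' v ∧
    ¬ M.adjE w w')

/-- The induced mixed subgraph of `M` on the vertex set `X`, kept on the same vertex
type (vertices outside `X` become isolated). -/
def induce (M : MixedGraph V) (X : Set V) : MixedGraph V where
  E u v := u ∈ X ∧ v ∈ X ∧ M.E u v
  irrefl := by
    intro v h
    exact M.irrefl v h.2.2

end MixedGraph

namespace SimpleGraph

variable {V : Type*}

/-- A simple graph is chordal: every cycle of length at least `4` has a chord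
(an edge between two non-consecutive vertices of the cycle). -/
def IsChordalGraph (G : SimpleGraph V) : Prop :=
  ∀ (l : ℕ) (f : ZMod l → V), 4 ≤ l → Function.Injective f →
    (∀ i, G.Adj (f i) (f (i + 1))) →
    ∃ i j : ZMod l, j ≠ i + 1 ∧ i ≠ j + 1 ∧ G.Adj (f i) (f j)

/-- The induced subgraph of `G` on the vertex set `X`, kept on the same vertex type
(vertices outside `X` become isolated). -/
def inducedOn (G : SimpleGraph V) (X : Set V) : SimpleGraph V where
  Adj u v := u ∈ X ∧ v ∈ X ∧ G.Adj u v
  symm := by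
    constructor
    intro u v h
    exact ⟨h.2.1, h.1, h.2.2.symm⟩
  loopless := by
    constructor
    intro v h
    exact G.loopless.irrefl v h.2.2

/-- The set of neighbours in `G` of vertices of `S`. -/
def nbhdSet (G : SimpleGraph V) (S : Set V) : Set V :=
  {v | ∃ u ∈ S, G.Adj u v}

/-- View an undirected graph as a mixed graph all of whose edges are undirected. -/
def toMixed (G : SimpleGraph V) : MixedGraph V :=
  ⟨G.Adj, fun v h => G.loopless.irrefl v h⟩

end SimpleGraph

namespace MixedGraph

variable {V : Type*}

/-- `M` is (the graphical representation of) a Markov equivalence class, by the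
Andersson–Madigan–Perlman characterization: (1) `M` is a chain graph; (2) every
undirected connected component of `M` is chordal; (3) `M` has no induced subgraph
`a→b—c`; (4) every directed edge of `M` is strongly protected. -/
def IsMEC (M : MixedGraph V) : Prop :=
  M.IsChainGraph ∧
  M.undirGraph.IsChordalGraph ∧
  (∀ a b c, M.dirE a b → M.undirE b c → M.adjE a c) ∧
  (∀ u v, M.dirE u v → M.StronglyProtected u v)

/-- `M` is a partial MEC: conditions (1)–(3) of the MEC characterization. -/
def IsPartialMEC (M : MixedGraph V) : Prop :=
  M.IsChainGraph ∧
  M.undirGraph.IsChordalGraph ∧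
  (∀ a b c, M.dirE a b → M.undirE b c → M.adjE a c)

end MixedGraph

/-- `MEC(G)` : the set of MECs with skeleton `G`. -/
def MECset {V : Type*} (G : SimpleGraph V) : Set (MixedGraph V) :=
  {M | M.IsMEC ∧ M.skeleton = G}

/-- `PMEC(G)` : the set of partial MECs with skeleton `G`. -/
def PMECset {V : Type*} (G : SimpleGraph V) : Set (MixedGraph V) :=
  {M | M.IsPartialMEC ∧ M.skeleton = G}

/-- `M' = P(M, Y)` : `M'` is the projection of `M` on the vertex set `Y`, i.e. the
(unique) MEC of the induced subgraph on `Y` whose set of v-structures equals that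
of `M[Y]`. -/
def IsProjection {V : Type*} (M : MixedGraph V) (Y : Set V) (M' : MixedGraph V) : Prop :=
  M' ∈ MECset (M.skeleton.inducedOn Y) ∧ M'.vstructs = (M.induce Y).vstructs

/-- `MEC(G, r, 1)` : MECs of `G` that contain a directed edge into `r`. -/
def MEC1 {V : Type*} (G : SimpleGraph V) (r : V) : Set (MixedGraph V) :=
  {M ∈ MECset G | ∃ x, M.dirE x r}

/-- `MEC(G, r, 0, i)` : MECs of `G` with no directed edge into `r` and exactly `i`
undirected edges incident to `r`. -/
def MEC0 {V : Type*} (G : SimpleGraph V) (r : V) (i : ℕ) : Set (MixedGraph V) :=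
  {M ∈ MECset G | (¬ ∃ x, M.dirE x r) ∧ {x | M.undirE r x}.ncard = i}

/-- The degree of `r` in `G`. -/
noncomputable def degS {V : Type*} (G : SimpleGraph V) (r : V) : ℕ :=
  {x | G.Adj r x}.ncard

/-- `n_1(G, r) = |MEC(G, r, 1)|`. -/
noncomputable def n1count {V : Type*} (G : SimpleGraph V) (r : V) : ℕ :=
  (MEC1 G r).ncard

/-- `n_0^i(G, r) = |MEC(G, r, 0, i)|`. -/
noncomputable def n0count {V : Type*} (G : SimpleGraph V) (r : V) (i : ℕ) : ℕ :=
  (MEC0 G r i).ncard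

/-- `n_0(G, r) = Σ_{i = 0}^{δ} n_0^i(G, r)`, where `δ` is the degree of `r` in `G`. -/
noncomputable def n0total {V : Type*} (G : SimpleGraph V) (r : V) : ℕ :=
  ∑ i ∈ Finset.range (degS G r + 1), n0count G r i

/-- The set of vertices lying on the `r1` side after cutting the edge `r1 — r2` of `G`
(i.e. the vertices reachable from `r1` in `G` with the edge `r1 — r2` deleted). -/
def cutSide {V : Type*} (G : SimpleGraph V) (r1 r2 : V) : Set V :=
  {v | (G.deleteEdges {s(r1, r2)}).Reachable r1 v}

/-- `MEC(G, O)` : the MECs of `G` whose induced subgraph on `X` (the vertex set of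
`O`) equals `O`. -/
def MECwith {V : Type*} (G : SimpleGraph V) (O : MixedGraph V) (X : Set V) :
    Set (MixedGraph V) :=
  {M ∈ MECset G | M.induce X = O}

/-- `O ∈ E(O1, O2)` : `O` is an extension of `(O1, O2)` (where `X1`, `X2` are the
vertex sets of `O1`, `O2`): for each `a ∈ {1,2}`, (i) every directed edge of `O_a` is a
directed edge of `O`; (ii) `V(O_a) = V(O[V_{O_a}])`; (iii) every undirected edge of
`O_a` that is directed in `O` is strongly protected in `O`. -/
def IsExtension {V : Type*} (O O1 O2 : MixedGraph V) (X1 X2 : Set V) : Prop :=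
  (∀ u v, O1.dirE u v → O.dirE u v) ∧
  (∀ u v, O2.dirE u v → O.dirE u v) ∧
  O1.vstructs = (O.induce X1).vstructs ∧
  O2.vstructs = (O.induce X2).vstructs ∧
  (∀ u v, O1.undirE u v → O.dirE u v → O.StronglyProtected u v) ∧
  (∀ u v, O2.undirE u v → O.dirE u v → O.StronglyProtected u v)

/-- The v-structure (recorded as the ordered triple `t = (a, b, c)` with `a → b ← c`)
contains the directed edge `x → y`. -/
def vstructContains {V : Type*} (t : V × V × V) (x y : V) : Prop :=
  (t.1 = x ∧ t.2.1 = y) ∨ (t.2.2 = x ∧ t.2.1 = y)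


/-!
Cutting the edge `r1 — r2` of the tree splits the vertices into `Y` and its complement, and
a v-structure of `M` either lies entirely on one side or uses the cut edge, in the single
orientation that `M` gives it. So `M[Y]` and `M[Yᶜ]` have as v-structures exactly those of `M`
lying on their side, and `(M1, M2)` is the projection precisely when `M1`, `M2` account for
all v-structures of `M` except some that use the cut edge, all in one orientation.
-/

namespace SimpleGraph

variable {V : Type*} {G : SimpleGraph V} {r1 r2 : V}

lemma mem_cutSide_self (G : SimpleGraph V) (r1 r2 : V) : r1 ∈ cutSide G r1 r2 :=
  Reachable.refl r1

lemma mem_cutSide_iff_of_adj {u w : V} (h : G.Adj u w) (he : s(u, w) ≠ s(r1, r2)) :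
    u ∈ cutSide G r1 r2 ↔ w ∈ cutSide G r1 r2 := by
  have h' : (G.deleteEdges {s(r1, r2)}).Adj u w := by simp [h, he]
  exact ⟨fun hu => hu.trans h'.reachable, fun hw => hw.trans h'.symm.reachable⟩

lemma cutSide_swap_eq_compl (hG : G.IsTree) (h : G.Adj r1 r2) :
    cutSide G r2 r1 = (cutSide G r1 r2)ᶜ := by
  have hdel : G.deleteEdges {s(r2, r1)} = G.deleteEdges {s(r1, r2)} := by rw [Sym2.eq_swap]
  have hbridge : ¬ (G.deleteEdges {s(r1, r2)}).Reachable r1 r2 :=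
    isBridge_iff.mp (isAcyclic_iff_forall_adj_isBridge.mp hG.isAcyclic h)
  ext v
  simp only [cutSide, Set.mem_compl_iff, Set.mem_ofPred_eq, hdel]
  refine ⟨fun h2 h1 => hbridge (h1.trans h2.symm), fun h1 => ?_⟩
  by_contra h2
  obtain ⟨p⟩ := hG.connected.preconnected r1 v
  obtain ⟨d, -, hd, hd'⟩ := p.exists_boundary_dart (cutSide G r1 r2 ∪ cutSide G r2 r1)
    (.inl (mem_cutSide_self G r1 r2)) (by simp [cutSide, hdel, h1, h2])
  by_cases he : s(d.fst, d.snd) = s(r1, r2)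
  · rcases Sym2.eq_iff.mp he with ⟨-, hs⟩ | ⟨-, hs⟩ <;> apply hd' <;> rw [hs]
    exacts [.inr (mem_cutSide_self G r2 r1), .inl (mem_cutSide_self G r1 r2)]
  · have he' : s(d.fst, d.snd) ≠ s(r2, r1) := fun h' => he (h'.trans Sym2.eq_swap)
    exact hd' (hd.imp (mem_cutSide_iff_of_adj d.adj he).mp (mem_cutSide_iff_of_adj d.adj he').mp)

end SimpleGraph

namespace MixedGraph

variable {V : Type*} {G : SimpleGraph V} {M M' : MixedGraph V} {Y : Set V}

lemma adj_of_skeleton_eq (hM : M.skeleton = G) {u v : V} (h : M.E u v) : G.Adj u v :=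
  hM ▸ Or.inl h

lemma vstructs_induce (M : MixedGraph V) (Y : Set V) :
    (M.induce Y).vstructs = M.vstructs ∩ Y ×ˢ Y ×ˢ Y := by
  ext ⟨a, b, c⟩
  simp only [vstructs, vstruct, dirE, adjE, induce, Set.mem_inter_iff, Set.mem_prod,
    Set.mem_ofPred_eq]
  tauto

lemma vstructs_subset_prod (hM : M.skeleton = G.inducedOn Y) :
    M.vstructs ⊆ Y ×ˢ Y ×ˢ Y := by
  rintro ⟨a, b, c⟩ ⟨hab, hcb, -⟩
  have hab' := adj_of_skeleton_eq hM hab.1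
  have hcb' := adj_of_skeleton_eq hM hcb.1
  exact ⟨hab'.1, hab'.2.1, hcb'.1⟩

lemma isProjection_iff (hM : M.skeleton = G) (hM' : M' ∈ MECset (G.inducedOn Y)) :
    IsProjection M Y M' ↔ M'.vstructs = (M.induce Y).vstructs :=
  ⟨And.right, fun h => ⟨hM ▸ hM', h⟩⟩

lemma dirE_of_vstructContains {t : V × V × V} (ht : t ∈ M.vstructs) {x y : V}
    (h : vstructContains t x y) : M.dirE x y := by
  obtain ⟨a, b, c⟩ := t
  rcases h with ⟨rfl, rfl⟩ | ⟨rfl, rfl⟩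
  exacts [ht.1, ht.2.1]

lemma vstructContains_or_mem_prod (hM : M.skeleton = G) {r1 r2 : V} {t : V × V × V}
    (ht : t ∈ M.vstructs) :
    vstructContains t r1 r2 ∨ vstructContains t r2 r1 ∨
      t ∈ cutSide G r1 r2 ×ˢ cutSide G r1 r2 ×ˢ cutSide G r1 r2 ∨
      t ∈ (cutSide G r1 r2)ᶜ ×ˢ (cutSide G r1 r2)ᶜ ×ˢ (cutSide G r1 r2)ᶜ := by
  obtain ⟨a, b, c⟩ := t
  obtain ⟨hab, hcb, -⟩ := ht
  have side : ∀ {u}, M.dirE u b →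
      (u = r1 ∧ b = r2) ∨ (u = r2 ∧ b = r1) ∨ (u ∈ cutSide G r1 r2 ↔ b ∈ cutSide G r1 r2) := by
    intro u hub
    by_cases he : s(u, b) = s(r1, r2)
    · exact (Sym2.eq_iff.mp he).imp id .inl
    · exact .inr (.inr (SimpleGraph.mem_cutSide_iff_of_adj (adj_of_skeleton_eq hM hub.1) he))
  rcases side hab with hab' | hab' | ha
  · exact .inl (Or.inl hab')
  · exact .inr (.inl (Or.inl hab'))
  rcases side hcb with hcb' | hcb' | hc
  · exact .inl (Or.inr hcb')
  · exact .inr (.inl (Or.inr hcb'))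
  by_cases hb : b ∈ cutSide G r1 r2 <;> simp [Set.mem_prod, ha, hc, hb]

lemma notMem_prod_of_vstructContains {t : V × V × V} {x y : V} (hx : x ∈ Y) (hy : y ∉ Y)
    (h : vstructContains t x y ∨ vstructContains t y x) :
    t ∉ Y ×ˢ Y ×ˢ Y ∧ t ∉ Yᶜ ×ˢ Yᶜ ×ˢ Yᶜ := by
  obtain ⟨a, b, c⟩ := t
  simp only [Set.mem_prod, Set.mem_compl_iff]
  rcases h with (⟨rfl, rfl⟩ | ⟨rfl, rfl⟩) | (⟨rfl, rfl⟩ | ⟨rfl, rfl⟩) <;> tauto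

/-- `M` orients the cut edge one way, so all v-structures using it agree. -/
lemma forall_vstructContains_or_forall_vstructContains_swap (hM : M.skeleton = G)
    {r1 r2 : V} :
    (∀ t ∈ M.vstructs, t ∉ cutSide G r1 r2 ×ˢ cutSide G r1 r2 ×ˢ cutSide G r1 r2 →
      t ∉ (cutSide G r1 r2)ᶜ ×ˢ (cutSide G r1 r2)ᶜ ×ˢ (cutSide G r1 r2)ᶜ →
      vstructContains t r1 r2) ∨
    (∀ t ∈ M.vstructs, t ∉ cutSide G r1 r2 ×ˢ cutSide G r1 r2 ×ˢ cutSide G r1 r2 →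
      t ∉ (cutSide G r1 r2)ᶜ ×ˢ (cutSide G r1 r2)ᶜ ×ˢ (cutSide G r1 r2)ᶜ →
      vstructContains t r2 r1) := by
  by_cases hdir : M.dirE r1 r2
  · refine .inl fun t ht hP hQ => ?_
    rcases vstructContains_or_mem_prod hM ht with h | h | h | h
    exacts [h, absurd (dirE_of_vstructContains ht h).1 hdir.2, absurd h hP, absurd h hQ]
  · refine .inr fun t ht hP hQ => ?_
    rcases vstructContains_or_mem_prod hM ht with h | h | h | h
    exacts [absurd (dirE_of_vstructContains ht h) hdir, h, absurd h hP, absurd h hQ]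

end MixedGraph

lemma Set.eq_inter_of_forall_notMem {α : Type*} {S A B P Q : Set α} (hAS : A ⊆ S)
    (hA : A ⊆ P) (hB : B ⊆ Q) (hPQ : Disjoint P Q) (h : ∀ t ∈ S, t ∉ A → t ∉ B → t ∉ P) :
    A = S ∩ P := by
  refine (Set.subset_inter hAS hA).antisymm fun t ⟨hS, hP⟩ => ?_
  by_contra hnA
  exact h t hS hnA (fun hBt => hPQ.notMem_of_mem_left hP (hB hBt)) hP

open MixedGraph SimpleGraph in
theorem projection_iff_vstructures_general {V : Type*}
    (G : SimpleGraph V) (hT : G.IsTree) (r1 r2 : V) (hadj : G.Adj r1 r2)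
    (V1 V2 : Set V) (hV1 : V1 = cutSide G r1 r2) (hV2 : V2 = cutSide G r2 r1)
    (G1 G2 : SimpleGraph V) (hG1 : G1 = G.inducedOn V1) (hG2 : G2 = G.inducedOn V2)
    (M M1 M2 : MixedGraph V)
    (hM : M ∈ MECset G) (hM1 : M1 ∈ MECset G1) (hM2 : M2 ∈ MECset G2) :
    (IsProjection M V1 M1 ∧ IsProjection M V2 M2) ↔
      (M1.vstructs ∪ M2.vstructs ⊆ M.vstructs ∧
        ((∀ t ∈ M.vstructs, t ∉ M1.vstructs → t ∉ M2.vstructs →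
            vstructContains t r1 r2) ∨
          (∀ t ∈ M.vstructs, t ∉ M1.vstructs → t ∉ M2.vstructs →
            vstructContains t r2 r1))) := by
  obtain ⟨-, hMsk⟩ := hM
  subst hV1 hG1 hG2
  obtain rfl : V2 = (cutSide G r1 r2)ᶜ := hV2.trans (cutSide_swap_eq_compl hT hadj)
  set Y := cutSide G r1 r2
  rw [isProjection_iff hMsk hM1, isProjection_iff hMsk hM2, vstructs_induce, vstructs_induce]
  constructor
  · rintro ⟨h1, h2⟩
    rw [h1, h2]
    refine ⟨Set.union_subset Set.inter_subset_left Set.inter_subset_left, ?_⟩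
    exact (forall_vstructContains_or_forall_vstructContains_swap hMsk).imp
      (fun h t ht h1 h2 => h t ht (fun hP => h1 ⟨ht, hP⟩) (fun hQ => h2 ⟨ht, hQ⟩))
      (fun h t ht h1 h2 => h t ht (fun hP => h1 ⟨ht, hP⟩) (fun hQ => h2 ⟨ht, hQ⟩))
  · rintro ⟨hsub, hor⟩
    have hr2 : r2 ∈ Yᶜ := cutSide_swap_eq_compl hT hadj ▸ mem_cutSide_self G r2 r1
    have hout : ∀ t ∈ M.vstructs, t ∉ M1.vstructs → t ∉ M2.vstructs →
        t ∉ Y ×ˢ Y ×ˢ Y ∧ t ∉ Yᶜ ×ˢ Yᶜ ×ˢ Yᶜ := fun t ht h1 h2 =>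
      notMem_prod_of_vstructContains (mem_cutSide_self G r1 r2) hr2
        (hor.imp (· t ht h1 h2) (· t ht h1 h2))
    have hA := vstructs_subset_prod hM1.2
    have hB := vstructs_subset_prod hM2.2
    have hPQ : Disjoint (Y ×ˢ Y ×ˢ Y) (Yᶜ ×ˢ Yᶜ ×ˢ Yᶜ) :=
      Set.disjoint_prod.mpr (.inl disjoint_compl_right)
    exact ⟨Set.eq_inter_of_forall_notMem (Set.subset_union_left.trans hsub) hA hB hPQ
        fun t ht h1 h2 => (hout t ht h1 h2).1,
      Set.eq_inter_of_forall_notMem (Set.subset_union_right.trans hsub) hB hA hPQ.symm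
        fun t ht h2 h1 => (hout t ht h1 h2).2⟩

theorem projection_iff_vstructures {V : Type*} [Fintype V] [DecidableEq V]
    (G : SimpleGraph V) (hT : G.IsTree) (r1 r2 : V) (hadj : G.Adj r1 r2)
    (V1 V2 : Set V) (hV1 : V1 = cutSide G r1 r2) (hV2 : V2 = cutSide G r2 r1)
    (G1 G2 : SimpleGraph V) (hG1 : G1 = G.inducedOn V1) (hG2 : G2 = G.inducedOn V2)
    (M M1 M2 : MixedGraph V)
    (hM : M ∈ MECset G) (hM1 : M1 ∈ MECset G1) (hM2 : M2 ∈ MECset G2) :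
    (IsProjection M V1 M1 ∧ IsProjection M V2 M2) ↔
      (M1.vstructs ∪ M2.vstructs ⊆ M.vstructs ∧
        ((∀ t ∈ M.vstructs, t ∉ M1.vstructs → t ∉ M2.vstructs →
            vstructContains t r1 r2) ∨
          (∀ t ∈ M.vstructs, t ∉ M1.vstructs → t ∉ M2.vstructs →
            vstructContains t r2 r1))) :=
  projection_iff_vstructures_general G hT r1 r2 hadj V1 V2 hV1 hV2 G1 G2 hG1 hG2 M M1 M2 hM hM1 hM2
end

section
/- Let G be a tree graph and (r1,r2) an edge of G; removing this edge yields subtrees G1 (containing r1) and G2 (containing r2). For every M1 ∈ MEC(G1,r1,1) and M2 ∈ MEC(G2,r2,1), the number of MECs M of G with P(M, V_{G1}, V_{G2}) = (M1, M2) is exactly two, and both of these MECs belong to MEC(G,r1,1). -/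
/-! In a tree the edge `r1 — r2` is the only edge between the two sides, and a tree has no
triangles. Hence condition (3), applied to the arrows `x1 → r1` of `M1` and `x2 → r2` of `M2`,
forbids undirected edges at `r1` and at `r2`: an MEC of `G` restricting to `M1` and `M2` is
determined by the orientation of `r1 — r2`. Conversely both orientations give MECs, the arrow
`r1 → r2` being protected by `x1 → r1` (form (a)) and `r2 → r1` by `x2 → r2`. -/

namespace SimpleGraph

variable {V : Type*} {G : SimpleGraph V}

theorem IsAcyclic.length_eq_one_of_isPath (hG : G.IsAcyclic) {u v : V} (huv : G.Adj u v)
    {p : G.Walk u v} (hp : p.IsPath) : p.length = 1 := by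
  simpa using congrArg (fun q : G.Path u v => q.1.length)
    ((hG.subsingleton_path u v).elim ⟨p, hp⟩ (Path.singleton huv))

theorem IsAcyclic.not_adj_of_adj_of_adj (hG : G.IsAcyclic) {a b c : V} (hab : G.Adj a b)
    (hbc : G.Adj b c) : ¬ G.Adj a c := fun hac => by
  have hp : (Walk.cons hab (Walk.cons hbc Walk.nil)).IsPath := by
    simp [Walk.cons_isPath_iff, hab.ne, hbc.ne, hac.ne]
  simpa using hG.length_eq_one_of_isPath hac hp

theorem IsAcyclic.le_two_of_cycle (hG : G.IsAcyclic) {l : ℕ} {f : ZMod l → V}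
    (hf : Function.Injective f) (hadj : ∀ i, G.Adj (f i) (f (i + 1))) : l ≤ 2 := by
  by_contra! hl
  set L := (List.range l).map (fun n : ℕ => f n)
  have hne : L ≠ [] := by simp [L]; omega
  have hchain : L.IsChain G.Adj := by
    simpa [L, List.isChain_map, List.isChain_range] using fun (n : ℕ) _ => hadj n
  have hnodup : L.Nodup := by
    refine List.Nodup.map_on (fun a ha b hb hab => ?_) List.nodup_range
    have := (ZMod.natCast_eq_natCast_iff' a b l).mp (hf hab)
    rwa [Nat.mod_eq_of_lt (List.mem_range.mp ha), Nat.mod_eq_of_lt (List.mem_range.mp hb)] at this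
  have hclose : G.Adj (L.head hne) (L.getLast hne) := by
    have h := hadj ((l - 1 : ℕ) : ZMod l)
    rw [← Nat.cast_succ, show (l - 1).succ = l by omega, ZMod.natCast_self] at h
    simpa [L, List.head_map, List.getLast_map] using h.symm
  have hpath : (Walk.ofSupport L hne hchain).IsPath := by
    rw [Walk.isPath_def, Walk.support_ofSupport]
    exact hnodup
  have := hG.length_eq_one_of_isPath hclose hpath
  simp [L] at this
  omega

theorem IsAcyclic.isChordalGraph (hG : G.IsAcyclic) : G.IsChordalGraph :=
  fun _ _ hl hf hadj => absurd (hG.le_two_of_cycle hf hadj) (by omega)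

theorem inducedOn_le (G : SimpleGraph V) (X : Set V) : G.inducedOn X ≤ G := fun _ _ h => h.2.2

structure IsEdgeCut (G : SimpleGraph V) (V1 V2 : Set V) (r1 r2 : V) : Prop where
  adj : G.Adj r1 r2
  left_mem : r1 ∈ V1
  right_mem : r2 ∈ V2
  notMem_right : ∀ ⦃v⦄, v ∈ V1 → v ∉ V2
  cover : ∀ v, v ∈ V1 ∨ v ∈ V2
  eq_of_adj : ∀ ⦃u v⦄, G.Adj u v → u ∈ V1 → v ∈ V2 → u = r1 ∧ v = r2

namespace IsEdgeCut

variable {V1 V2 : Set V} {r1 r2 : V}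

theorem symm (hC : G.IsEdgeCut V1 V2 r1 r2) : G.IsEdgeCut V2 V1 r2 r1 where
  adj := hC.adj.symm
  left_mem := hC.right_mem
  right_mem := hC.left_mem
  notMem_right := fun _ h2 h1 => hC.notMem_right h1 h2
  cover := fun v => (hC.cover v).symm
  eq_of_adj := fun _ _ h h2 h1 => (hC.eq_of_adj h.symm h1 h2).symm

theorem adj_cases (hC : G.IsEdgeCut V1 V2 r1 r2) {u v : V} (h : G.Adj u v) :
    (u ∈ V1 ∧ v ∈ V1) ∨ (u ∈ V2 ∧ v ∈ V2) ∨ (u = r1 ∧ v = r2) ∨ (u = r2 ∧ v = r1) := by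
  rcases hC.cover u with hu | hu <;> rcases hC.cover v with hv | hv
  · exact Or.inl ⟨hu, hv⟩
  · exact Or.inr (Or.inr (Or.inl (hC.eq_of_adj h hu hv)))
  · exact Or.inr (Or.inr (Or.inr (hC.symm.eq_of_adj h hu hv)))
  · exact Or.inr (Or.inl ⟨hu, hv⟩)

theorem mem_left_of_adj (hC : G.IsEdgeCut V1 V2 r1 r2) {u v : V} (h : G.Adj u v) (hu : u ∈ V1)
    (hne : ¬ (u = r1 ∧ v = r2)) : v ∈ V1 :=
  (hC.cover v).resolve_right fun hv => hne (hC.eq_of_adj h hu hv)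

end IsEdgeCut

theorem mem_cutSide_of_adj {r1 r2 v w : V} (hv : v ∈ cutSide G r1 r2) (h : G.Adj v w)
    (hne : s(v, w) ≠ s(r1, r2)) : w ∈ cutSide G r1 r2 :=
  hv.trans (deleteEdges_adj.mpr ⟨h, hne⟩).reachable

theorem IsTree.isEdgeCut_cutSide (hT : G.IsTree) {r1 r2 : V} (hadj : G.Adj r1 r2) :
    G.IsEdgeCut (cutSide G r1 r2) (cutSide G r2 r1) r1 r2 := by
  have hdisj : ∀ ⦃v⦄, v ∈ cutSide G r1 r2 → v ∉ cutSide G r2 r1 := by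
    intro v h1 h2
    rw [cutSide, Set.mem_ofPred_eq, Sym2.eq_swap] at h2
    exact isBridge_iff.mp (isAcyclic_iff_forall_adj_isBridge.mp hT.isAcyclic hadj)
      (h1.trans h2.symm)
  refine ⟨hadj, Reachable.refl r1, Reachable.refl r2, hdisj, fun v => ?_, fun u v h hu hv => ?_⟩
  · obtain ⟨p⟩ := hT.connected.preconnected r1 v
    suffices ∀ {a b : V}, G.Walk a b → a ∈ cutSide G r1 r2 ∨ a ∈ cutSide G r2 r1 →
        b ∈ cutSide G r1 r2 ∨ b ∈ cutSide G r2 r1 from this p (Or.inl (Reachable.refl r1))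
    intro a b p
    induction p with
    | nil => exact id
    | @cons a c b h p ih =>
      refine fun ha => ih ?_
      by_cases he : s(a, c) = s(r1, r2)
      · rcases Sym2.eq_iff.mp he with ⟨-, rfl⟩ | ⟨-, rfl⟩
        · exact Or.inr (Reachable.refl _)
        · exact Or.inl (Reachable.refl _)
      · rcases ha with ha | ha
        · exact Or.inl (mem_cutSide_of_adj ha h he)
        · exact Or.inr (mem_cutSide_of_adj ha h (by rwa [Sym2.eq_swap (a := r2)]))
  · by_cases he : s(u, v) = s(r1, r2)
    · rcases Sym2.eq_iff.mp he with h' | ⟨rfl, -⟩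
      · exact h'
      · exact absurd (Reachable.refl u) (hdisj hu)
    · exact absurd hv (hdisj (mem_cutSide_of_adj hu h he))

end SimpleGraph

namespace MixedGraph

variable {V : Type*}

theorem ext {A B : MixedGraph V} (h : ∀ u v, A.E u v ↔ B.E u v) : A = B := by
  cases A; cases B
  congr
  funext u v
  exact propext (h u v)

theorem E_iff_adjE_and_not_dirE (M : MixedGraph V) (u v : V) :
    M.E u v ↔ M.adjE u v ∧ ¬ M.dirE v u := by
  unfold adjE dirE
  tauto

theorem eq_of_skeleton_eq_of_dirE_iff {A B : MixedGraph V} (hs : A.skeleton = B.skeleton)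
    (hd : ∀ u v, A.dirE u v ↔ B.dirE u v) : A = B := by
  have hadj : A.adjE = B.adjE := congrArg SimpleGraph.Adj hs
  refine ext fun u v => ?_
  rw [E_iff_adjE_and_not_dirE, E_iff_adjE_and_not_dirE, hadj, hd]

/-- Since `a` is never adjacent to itself, `vstructs` also contains the degenerate triple
`(a, b, a)` of every arrow `a → b`: equal v-structure sets force equal directed edges, so a
projection is just a restriction (`isProjection_iff_induce_eq`). -/
theorem dirE_iff_mem_vstructs (M : MixedGraph V) (a b : V) :
    M.dirE a b ↔ (a, b, a) ∈ M.vstructs :=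
  ⟨fun h => ⟨h, h, fun hc => M.irrefl a (hc.elim id id)⟩, fun h => h.1⟩

theorem skeleton_induce (M : MixedGraph V) (X : Set V) :
    (M.induce X).skeleton = M.skeleton.inducedOn X := by
  ext u v
  simp only [skeleton, induce, adjE, SimpleGraph.inducedOn]
  tauto

theorem adjE_of_E {M : MixedGraph V} {u v : V} (h : M.E u v) : M.adjE u v := Or.inl h

variable {M : MixedGraph V} {X : Set V} {u v : V}

theorem induce_dirE_iff : (M.induce X).dirE u v ↔ u ∈ X ∧ v ∈ X ∧ M.dirE u v := by
  simp only [dirE, induce]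
  tauto

theorem induce_undirE_iff : (M.induce X).undirE u v ↔ u ∈ X ∧ v ∈ X ∧ M.undirE u v := by
  simp only [undirE, induce]
  tauto

theorem induce_adjE_iff : (M.induce X).adjE u v ↔ u ∈ X ∧ v ∈ X ∧ M.adjE u v := by
  simp only [adjE, induce]
  tauto

theorem StronglyProtected.of_induce (hu : u ∈ X) (hv : v ∈ X)
    (h : (M.induce X).StronglyProtected u v) : M.StronglyProtected u v := by
  simp only [StronglyProtected, induce_dirE_iff, induce_undirE_iff, induce_adjE_iff] at h
  rcases h with ⟨w, ⟨hw, -, hwu⟩, hwv⟩ | ⟨w, ⟨hw, -, hwv⟩, huw⟩ | ⟨w, ⟨-, -, huw⟩, ⟨-, -, hwv⟩⟩ |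
      ⟨w, w', hne, ⟨hw, -, hwu⟩, ⟨hw', -, hw'u⟩, ⟨-, -, hwv⟩, ⟨-, -, hw'v⟩, hww'⟩
  · exact Or.inl ⟨w, hwu, fun h => hwv ⟨hw, hv, h⟩⟩
  · exact Or.inr (Or.inl ⟨w, hwv, fun h => huw ⟨hu, hw, h⟩⟩)
  · exact Or.inr (Or.inr (Or.inl ⟨w, huw, hwv⟩))
  · exact Or.inr (Or.inr (Or.inr ⟨w, w', hne, hwu, hw'u, hwv, hw'v, fun h => hww' ⟨hw, hw', h⟩⟩))

theorem inducedOn_adj_of_E {G : SimpleGraph V}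
    (hM : M.skeleton = G.inducedOn X) (h : M.E u v) : u ∈ X ∧ v ∈ X ∧ G.Adj u v := by
  have : M.skeleton.Adj u v := adjE_of_E h
  rwa [hM] at this

theorem isAcyclic_skeleton_induce (h : M.skeleton.IsAcyclic) :
    (M.induce X).skeleton.IsAcyclic := by
  rw [skeleton_induce]
  exact h.anti (M.skeleton.inducedOn_le X)

theorem isChainGraph_of_isAcyclic (h : M.skeleton.IsAcyclic) : M.IsChainGraph := by
  intro l f hl hf hE i hdir
  obtain rfl : l = 2 := le_antisymm (h.le_two_of_cycle hf fun j => adjE_of_E (hE j)) hl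
  have hi : i + 1 + 1 = i := by rw [add_assoc, show (1 + 1 : ZMod 2) = 0 from rfl, add_zero]
  have hback := hE (i + 1)
  rw [hi] at hback
  exact hdir.2 hback

theorem undirGraph_le_skeleton (M : MixedGraph V) : M.undirGraph ≤ M.skeleton :=
  fun _ _ h => adjE_of_E h.1

theorem isMEC_of_isAcyclic (h : M.skeleton.IsAcyclic)
    (h3 : ∀ a b c, M.dirE a b → M.undirE b c → M.adjE a c)
    (h4 : ∀ u v, M.dirE u v → M.StronglyProtected u v) : M.IsMEC :=
  ⟨isChainGraph_of_isAcyclic h, (h.anti M.undirGraph_le_skeleton).isChordalGraph, h3, h4⟩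

theorem IsMEC.not_undirE_of_dirE (hM : M.IsMEC) (h : M.skeleton.IsAcyclic) {x u v : V}
    (hxu : M.dirE x u) : ¬ M.undirE u v := fun huv =>
  h.not_adj_of_adj_of_adj (adjE_of_E hxu.1) (adjE_of_E huv.1) (hM.2.2.1 x u v hxu huv)

theorem adjE_of_isMEC_induce {a b c : V} (hX : (M.induce X).IsMEC) (ha : a ∈ X)
    (hb : b ∈ X) (hc : c ∈ X) (hab : M.dirE a b) (hbc : M.undirE b c) : M.adjE a c :=
  (induce_adjE_iff.mp (hX.2.2.1 a b c (induce_dirE_iff.mpr ⟨ha, hb, hab⟩)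
    (induce_undirE_iff.mpr ⟨hb, hc, hbc⟩))).2.2

theorem isProjection_iff_induce_eq {N : MixedGraph V}
    (hN : N ∈ MECset (M.skeleton.inducedOn X)) : IsProjection M X N ↔ M.induce X = N := by
  refine ⟨fun h => (eq_of_skeleton_eq_of_dirE_iff ?_ fun u v => ?_).symm, ?_⟩
  · rw [skeleton_induce, hN.2]
  · rw [dirE_iff_mem_vstructs, dirE_iff_mem_vstructs, h.2]
  · rintro rfl
    exact ⟨hN, rfl⟩

end MixedGraph

namespace SimpleGraph.IsEdgeCut

open MixedGraph

variable {V : Type*} {G : SimpleGraph V} {V1 V2 : Set V} {r1 r2 : V}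

def glue (hC : G.IsEdgeCut V1 V2 r1 r2) (M1 M2 : MixedGraph V) : MixedGraph V where
  E u v := M1.E u v ∨ M2.E u v ∨ (u = r1 ∧ v = r2)
  irrefl v := by
    rintro (h | h | ⟨rfl, h⟩)
    exacts [M1.irrefl v h, M2.irrefl v h, hC.adj.ne h]

variable {M1 M2 M : MixedGraph V}

theorem glue_E_left (hC : G.IsEdgeCut V1 V2 r1 r2) : (hC.glue M1 M2).E r1 r2 :=
  Or.inr (Or.inr ⟨rfl, rfl⟩)

theorem not_glue_E_right {hC : G.IsEdgeCut V1 V2 r1 r2} (h1 : M1.skeleton = G.inducedOn V1)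
    (h2 : M2.skeleton = G.inducedOn V2) : ¬ (hC.glue M1 M2).E r2 r1 := by
  rintro (h | h | ⟨-, h⟩)
  · exact hC.notMem_right (inducedOn_adj_of_E h1 h).1 hC.right_mem
  · exact hC.notMem_right hC.left_mem (inducedOn_adj_of_E h2 h).2.1
  · exact hC.adj.ne h

theorem skeleton_glue {hC : G.IsEdgeCut V1 V2 r1 r2} (h1 : M1.skeleton = G.inducedOn V1)
    (h2 : M2.skeleton = G.inducedOn V2) :
    (hC.glue M1 M2).skeleton = G := by
  have hE : ∀ {u v}, (hC.glue M1 M2).E u v → G.Adj u v := by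
    rintro u v (h | h | ⟨rfl, rfl⟩)
    exacts [(inducedOn_adj_of_E h1 h).2.2, (inducedOn_adj_of_E h2 h).2.2, hC.adj]
  ext u v
  refine ⟨fun h => h.elim hE fun h => (hE h).symm, fun h => ?_⟩
  rcases hC.adj_cases h with ⟨hu, hv⟩ | ⟨hu, hv⟩ | ⟨rfl, rfl⟩ | ⟨rfl, rfl⟩
  · have : M1.skeleton.Adj u v := h1 ▸ ⟨hu, hv, h⟩
    exact this.imp Or.inl Or.inl
  · have : M2.skeleton.Adj u v := h2 ▸ ⟨hu, hv, h⟩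
    exact this.imp (Or.inr ∘ Or.inl) (Or.inr ∘ Or.inl)
  · exact Or.inl (hC.glue_E_left)
  · exact Or.inr (hC.glue_E_left)

theorem induce_glue_left {hC : G.IsEdgeCut V1 V2 r1 r2} (h1 : M1.skeleton = G.inducedOn V1)
    (h2 : M2.skeleton = G.inducedOn V2) : (hC.glue M1 M2).induce V1 = M1 := by
  refine ext fun u v => ⟨?_, fun h => ⟨(inducedOn_adj_of_E h1 h).1,
    (inducedOn_adj_of_E h1 h).2.1, Or.inl h⟩⟩
  rintro ⟨hu, hv, h | h | ⟨-, rfl⟩⟩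
  · exact h
  · exact absurd (inducedOn_adj_of_E h2 h).1 (hC.notMem_right hu)
  · exact absurd hC.right_mem (hC.notMem_right hv)

theorem induce_glue_right {hC : G.IsEdgeCut V1 V2 r1 r2} (h1 : M1.skeleton = G.inducedOn V1)
    (h2 : M2.skeleton = G.inducedOn V2) : (hC.glue M1 M2).induce V2 = M2 := by
  refine ext fun u v => ⟨?_, fun h => ⟨(inducedOn_adj_of_E h2 h).1,
    (inducedOn_adj_of_E h2 h).2.1, Or.inr (Or.inl h)⟩⟩
  rintro ⟨hu, hv, h | h | ⟨rfl, -⟩⟩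
  · exact absurd hu (hC.notMem_right (inducedOn_adj_of_E h1 h).1)
  · exact h
  · exact absurd hu (hC.notMem_right hC.left_mem)

theorem eq_glue_induce (hC : G.IsEdgeCut V1 V2 r1 r2) (hM : M.skeleton = G) (h12 : M.E r1 r2)
    (h21 : ¬ M.E r2 r1) : M = hC.glue (M.induce V1) (M.induce V2) := by
  refine ext fun u v => ⟨fun h => ?_, ?_⟩
  · have huv : G.Adj u v := hM ▸ adjE_of_E h
    rcases hC.adj_cases huv with ⟨hu, hv⟩ | ⟨hu, hv⟩ | huv | ⟨rfl, rfl⟩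
    exacts [Or.inl ⟨hu, hv, h⟩, Or.inr (Or.inl ⟨hu, hv, h⟩), Or.inr (Or.inr huv), absurd h h21]
  · rintro (⟨-, -, h⟩ | ⟨-, -, h⟩ | ⟨rfl, rfl⟩)
    exacts [h, h, h12]

theorem isMEC_of_isMEC_induce (hC : G.IsEdgeCut V1 V2 r1 r2) (hG : G.IsAcyclic)
    (hM : M.skeleton = G) (h1 : (M.induce V1).IsMEC) (h2 : (M.induce V2).IsMEC) {x1 x2 : V}
    (hx1 : M.dirE x1 r1) (hx2 : (M.induce V2).dirE x2 r2) (h12 : M.dirE r1 r2) : M.IsMEC := by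
  have hadj : ∀ {u v}, M.adjE u v → G.Adj u v := fun h => hM ▸ h
  refine isMEC_of_isAcyclic (hM ▸ hG) (fun a b c hab hbc => ?_) (fun u v huv => ?_)
  · rcases hC.cover b with hb | hb
    · have hc := hC.mem_left_of_adj (hadj (adjE_of_E hbc.1)) hb
        (by rintro ⟨rfl, rfl⟩; exact h12.2 hbc.2)
      have ha := hC.mem_left_of_adj (hadj (adjE_of_E hab.1)).symm hb
        (by rintro ⟨rfl, rfl⟩; exact h12.2 hab.1)
      exact adjE_of_isMEC_induce h1 ha hb hc hab hbc
    · have hc := hC.symm.mem_left_of_adj (hadj (adjE_of_E hbc.1)) hb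
        (by rintro ⟨rfl, rfl⟩; exact h12.2 hbc.1)
      have ha := hC.symm.mem_left_of_adj (hadj (adjE_of_E hab.1)).symm hb
        (by
          rintro ⟨rfl, rfl⟩
          exact h2.not_undirE_of_dirE (isAcyclic_skeleton_induce (hM ▸ hG)) hx2
            (induce_undirE_iff.mpr ⟨hb, hc, hbc⟩))
      exact adjE_of_isMEC_induce h2 ha hb hc hab hbc
  · obtain ⟨rfl, rfl⟩ | hne := em (u = r1 ∧ v = r2)
    · exact Or.inl ⟨x1, hx1, fun h => hG.not_adj_of_adj_of_adj
        (hadj (adjE_of_E hx1.1)) hC.adj (hadj h)⟩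
    rcases hC.cover u with hu | hu
    · have hv := hC.mem_left_of_adj (hadj (adjE_of_E huv.1)) hu hne
      exact (h1.2.2.2 u v (induce_dirE_iff.mpr ⟨hu, hv, huv⟩)).of_induce hu hv
    · have hv := hC.symm.mem_left_of_adj (hadj (adjE_of_E huv.1)) hu
        (by rintro ⟨rfl, rfl⟩; exact h12.2 huv.1)
      exact (h2.2.2.2 u v (induce_dirE_iff.mpr ⟨hu, hv, huv⟩)).of_induce hu hv

theorem isMEC_glue {hC : G.IsEdgeCut V1 V2 r1 r2} (hG : G.IsAcyclic)
    (hM1 : M1 ∈ MECset (G.inducedOn V1)) (hM2 : M2 ∈ MECset (G.inducedOn V2)) {x1 x2 : V}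
    (hx1 : M1.dirE x1 r1) (hx2 : M2.dirE x2 r2) : (hC.glue M1 M2).IsMEC := by
  obtain ⟨hM1, h1⟩ := hM1
  obtain ⟨hM2, h2⟩ := hM2
  have e1 := induce_glue_left (hC := hC) h1 h2
  have e2 := induce_glue_right (hC := hC) h1 h2
  refine hC.isMEC_of_isMEC_induce hG (skeleton_glue h1 h2) (by rwa [e1]) (by rwa [e2])
    (induce_dirE_iff.mp (by rwa [e1] : ((hC.glue M1 M2).induce V1).dirE x1 r1)).2.2
    (by rwa [e2]) ⟨hC.glue_E_left, not_glue_E_right h1 h2⟩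

theorem setOf_induce_eq_pair (hC : G.IsEdgeCut V1 V2 r1 r2) (hG : G.IsAcyclic)
    (hM1 : M1 ∈ MECset (G.inducedOn V1)) (hM2 : M2 ∈ MECset (G.inducedOn V2)) {x1 x2 : V}
    (hx1 : M1.dirE x1 r1) (hx2 : M2.dirE x2 r2) :
    {M | M ∈ MECset G ∧ M.induce V1 = M1 ∧ M.induce V2 = M2} =
      {hC.glue M1 M2, hC.symm.glue M2 M1} := by
  ext M
  refine ⟨?_, ?_⟩
  · rintro ⟨⟨hM, hMG⟩, rfl, rfl⟩
    have hr1 : ¬ M.undirE r1 r2 :=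
      hM.not_undirE_of_dirE (hMG ▸ hG) (induce_dirE_iff.mp hx1).2.2
    rcases (hMG ▸ hC.adj : M.skeleton.Adj r1 r2) with h12 | h21
    · exact Or.inl (hC.eq_glue_induce hMG h12 fun h21 => hr1 ⟨h12, h21⟩)
    · exact Or.inr (hC.symm.eq_glue_induce hMG h21 fun h12 => hr1 ⟨h12, h21⟩)
  · rintro (rfl | rfl)
    · exact ⟨⟨isMEC_glue hG hM1 hM2 hx1 hx2, skeleton_glue hM1.2 hM2.2⟩,
        induce_glue_left hM1.2 hM2.2, induce_glue_right hM1.2 hM2.2⟩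
    · exact ⟨⟨isMEC_glue hG hM2 hM1 hx2 hx1, skeleton_glue hM2.2 hM1.2⟩,
        induce_glue_right hM2.2 hM1.2, induce_glue_left hM2.2 hM1.2⟩

theorem glue_ne_symm_glue {hC : G.IsEdgeCut V1 V2 r1 r2} (h1 : M1.skeleton = G.inducedOn V1)
    (h2 : M2.skeleton = G.inducedOn V2) : hC.glue M1 M2 ≠ hC.symm.glue M2 M1 := fun h =>
  not_glue_E_right h2 h1 (h ▸ hC.glue_E_left)

end SimpleGraph.IsEdgeCut

theorem setOf_isProjection_eq_setOf_induce {V : Type*} {G : SimpleGraph V} {V1 V2 : Set V}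
    {M1 M2 : MixedGraph V} (hM1 : M1 ∈ MECset (G.inducedOn V1))
    (hM2 : M2 ∈ MECset (G.inducedOn V2)) :
    {M | M ∈ MECset G ∧ IsProjection M V1 M1 ∧ IsProjection M V2 M2} =
      {M | M ∈ MECset G ∧ M.induce V1 = M1 ∧ M.induce V2 = M2} := by
  ext M
  refine and_congr_right fun hM => ?_
  rw [MixedGraph.isProjection_iff_induce_eq (hM.2 ▸ hM1),
    MixedGraph.isProjection_iff_induce_eq (hM.2 ▸ hM2)]

theorem counting_M1_M1_general {V : Type*}
    (G : SimpleGraph V) (hT : G.IsTree) (r1 r2 : V) (hadj : G.Adj r1 r2)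
    (V1 V2 : Set V) (hV1 : V1 = cutSide G r1 r2) (hV2 : V2 = cutSide G r2 r1)
    (G1 G2 : SimpleGraph V) (hG1 : G1 = G.inducedOn V1) (hG2 : G2 = G.inducedOn V2)
    (M1 M2 : MixedGraph V) (hM1 : M1 ∈ MEC1 G1 r1) (hM2 : M2 ∈ MEC1 G2 r2)
    (S : Set (MixedGraph V))
    (hS : S = {M | M ∈ MECset G ∧ IsProjection M V1 M1 ∧ IsProjection M V2 M2}) :
    S.ncard = 2 ∧ S ⊆ MEC1 G r1 := by
  subst hG1 hG2
  have hC : G.IsEdgeCut V1 V2 r1 r2 := hV1 ▸ hV2 ▸ hT.isEdgeCut_cutSide hadj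
  obtain ⟨hM1, x1, hx1⟩ := hM1
  obtain ⟨hM2, x2, hx2⟩ := hM2
  rw [setOf_isProjection_eq_setOf_induce hM1 hM2] at hS
  refine ⟨?_, fun M hM => ?_⟩
  · rw [hS, hC.setOf_induce_eq_pair hT.isAcyclic hM1 hM2 hx1 hx2]
    exact Set.ncard_pair (SimpleGraph.IsEdgeCut.glue_ne_symm_glue hM1.2 hM2.2)
  · obtain ⟨hMG, hMV1, -⟩ := hS ▸ hM
    exact ⟨hMG, x1, (MixedGraph.induce_dirE_iff.mp (hMV1 ▸ hx1)).2.2⟩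

theorem counting_M1_M1 {V : Type*} [Fintype V] [DecidableEq V]
    (G : SimpleGraph V) (hT : G.IsTree) (r1 r2 : V) (hadj : G.Adj r1 r2)
    (V1 V2 : Set V) (hV1 : V1 = cutSide G r1 r2) (hV2 : V2 = cutSide G r2 r1)
    (G1 G2 : SimpleGraph V) (hG1 : G1 = G.inducedOn V1) (hG2 : G2 = G.inducedOn V2)
    (M1 M2 : MixedGraph V) (hM1 : M1 ∈ MEC1 G1 r1) (hM2 : M2 ∈ MEC1 G2 r2)
    (S : Set (MixedGraph V))
    (hS : S = {M | M ∈ MECset G ∧ IsProjection M V1 M1 ∧ IsProjection M V2 M2}) :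
    S.ncard = 2 ∧ S ⊆ MEC1 G r1 :=
  counting_M1_M1_general G hT r1 r2 hadj V1 V2 hV1 hV2 G1 G2 hG1 hG2 M1 M2 hM1 hM2 S hS
end

section
/- Let G1 be a chordal undirected graph, let r1 be a clique of G1, and let P = (u_0 = x, u_1, …, u_l = y) be a chordless path in G1 with l ≥ 2 such that x, y ∈ r1 ∪ N(r1,G1). Then every node of P lies in r1 ∪ N(r1,G1). -/
/-! In a chordal graph, let `x = u₀, …, uₙ = y` be a chordless path with `n ≥ 2` whose ends
lie in `N[K] = K ∪ N(K)` for a clique `K`, while no interior vertex does. Then `x`, `y` are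
non-adjacent, and either some `c ∈ K` is adjacent to both ends, or there are adjacent
`a, b ∈ K` with `a ~ x`, `b ~ y`, `a ≁ y`, `b ≁ x`. In the first case `c` closes the path into
an induced cycle of length `n + 2 ≥ 4`; in the second `b` does the same for the chordless path
`a, x, …, y`. Hence some interior vertex lies in `N[K]`, and splitting the path there gives the
theorem by induction on its length. -/

namespace SimpleGraph

variable {V : Type*} {G : SimpleGraph V}

/-- `u 0, u 1, …, u n` is an induced path of `G`; the values of `u` beyond `n` play no role. -/
structure IsChordlessPath (G : SimpleGraph V) (u : ℕ → V) (n : ℕ) : Prop where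
  injOn : Set.InjOn u (Set.Iic n)
  adj : ∀ t < n, G.Adj (u t) (u (t + 1))
  not_adj : ∀ s t, s + 1 < t → t ≤ n → ¬ G.Adj (u s) (u t)

namespace IsChordlessPath

variable {u : ℕ → V} {n : ℕ}

theorem of_fin {p : Fin (n + 1) → V} (hinj : Function.Injective p)
    (hpath : ∀ i : Fin n, G.Adj (p i.castSucc) (p i.succ))
    (hchordless : ∀ i j : Fin (n + 1), (i : ℕ) + 1 < (j : ℕ) → ¬ G.Adj (p i) (p j)) :
    G.IsChordlessPath (fun t => p ⟨min t n, by omega⟩) n where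
  injOn s hs t ht hst := by
    have := congrArg Fin.val (hinj hst)
    simp only [Set.mem_Iic] at hs ht this
    omega
  adj t ht := by
    convert hpath ⟨t, ht⟩ using 2 <;> (apply Fin.ext; simp; omega)
  not_adj s t hst ht := hchordless _ _ (by simp; omega)

theorem of_le (hu : G.IsChordlessPath u n) {m : ℕ} (hm : m ≤ n) : G.IsChordlessPath u m where
  injOn := hu.injOn.mono (Set.Iic_subset_Iic.mpr hm)
  adj t ht := hu.adj t (by omega)
  not_adj s t hst ht := hu.not_adj s t hst (by omega)

theorem drop (hu : G.IsChordlessPath u n) {m : ℕ} (hm : m ≤ n) :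
    G.IsChordlessPath (fun t => u (m + t)) (n - m) where
  injOn s hs t ht hst := by
    simp only [Set.mem_Iic] at hs ht
    have := hu.injOn (show m + s ∈ Set.Iic n by simp; omega)
      (show m + t ∈ Set.Iic n by simp; omega) hst
    omega
  adj t ht := hu.adj (m + t) (by omega)
  not_adj s t hst ht := hu.not_adj (m + s) (m + t) (by omega) (by omega)

theorem cons (hu : G.IsChordlessPath u n) {a : V} (ha : G.Adj a (u 0))
    (hfar : ∀ t, 0 < t → t ≤ n → u t ≠ a ∧ ¬ G.Adj a (u t)) :
    G.IsChordlessPath (fun t => if t = 0 then a else u (t - 1)) (n + 1) where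
  injOn s hs t ht hst := by
    simp only [Set.mem_Iic] at hs ht
    have hne : ∀ t ≤ n, u t ≠ a := fun t ht h => by
      rcases Nat.eq_zero_or_pos t with rfl | ht0
      · exact G.loopless.irrefl a (h ▸ ha)
      · exact (hfar t ht0 ht).1 h
    dsimp only at hst
    split_ifs at hst with hs0 ht0 ht0
    · omega
    · exact absurd hst.symm (hne _ (by omega))
    · exact absurd hst (hne _ (by omega))
    · have := hu.injOn (show s - 1 ∈ Set.Iic n by simp; omega)
        (show t - 1 ∈ Set.Iic n by simp; omega) hst
      omega
  adj t ht := by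
    cases t with
    | zero => simpa using ha
    | succ t => simpa using hu.adj t (by omega)
  not_adj s t hst ht := by
    obtain ⟨t, rfl⟩ : ∃ t', t = t' + 1 := ⟨t - 1, by omega⟩
    cases s with
    | zero => simpa using (hfar t (by omega) (by omega)).2
    | succ s => simpa using hu.not_adj s t (by omega) (by omega)

end IsChordlessPath

namespace IsChordalGraph

variable {u : ℕ → V} {n : ℕ}

theorem exists_chord (hG : G.IsChordalGraph) {w : ℕ → V} (hn : 3 ≤ n)
    (hinj : Set.InjOn w (Set.Iic n)) (hadj : ∀ t < n, G.Adj (w t) (w (t + 1)))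
    (hclose : G.Adj (w n) (w 0)) :
    ∃ s t, s + 1 < t ∧ t ≤ n ∧ (0 < s ∨ t < n) ∧ G.Adj (w s) (w t) := by
  have hsucc : ∀ z : ZMod (n + 1), (z + 1).val = if z.val = n then 0 else z.val + 1 := by
    intro z
    have : Fact (1 < n + 1) := ⟨by omega⟩
    have hz := z.val_lt
    rw [ZMod.val_add, ZMod.val_one]
    split_ifs with h
    · rw [h, Nat.mod_self]
    · exact Nat.mod_eq_of_lt (by omega)
  have finj : Function.Injective (fun z : ZMod (n + 1) => w z.val) := fun a b h =>
    ZMod.val_injective _ (hinj (by simpa using Nat.lt_succ_iff.mp a.val_lt)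
      (by simpa using Nat.lt_succ_iff.mp b.val_lt) h)
  have fadj : ∀ z : ZMod (n + 1), G.Adj (w z.val) (w (z + 1).val) := by
    intro z
    have hz := z.val_lt
    rw [hsucc]
    split_ifs with h
    · rwa [h]
    · exact hadj _ (by omega)
  have hchord : ∀ zi zj : ZMod (n + 1), zj ≠ zi + 1 → zi ≠ zj + 1 → zi.val < zj.val →
      zi.val + 1 < zj.val ∧ zj.val ≤ n ∧ (0 < zi.val ∨ zj.val < n) := by
    intro zi zj h1 h2 hlt
    have hj := zj.val_lt
    refine ⟨?_, by omega, ?_⟩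
    · by_contra h
      apply h1
      apply ZMod.val_injective
      rw [hsucc, if_neg (by omega)]
      omega
    · by_contra h
      apply h2
      apply ZMod.val_injective
      rw [hsucc, if_pos (by omega)]
      omega
  obtain ⟨zi, zj, h1, h2, hij⟩ := hG (n + 1) (fun z => w z.val) (by omega) finj fadj
  rcases lt_trichotomy zi.val zj.val with hlt | heq | hgt
  · obtain ⟨hst, htn, hends⟩ := hchord zi zj h1 h2 hlt
    exact ⟨_, _, hst, htn, hends, hij⟩
  · exact absurd (heq ▸ hij) (G.loopless.irrefl _)
  · obtain ⟨hst, htn, hends⟩ := hchord zj zi h2 h1 hgt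
    exact ⟨_, _, hst, htn, hends, hij.symm⟩

theorem exists_interior_eq_or_adj (hG : G.IsChordalGraph) (hu : G.IsChordlessPath u n)
    (hn : 2 ≤ n) {c : V} (hc0 : G.Adj c (u 0)) (hcn : G.Adj c (u n)) :
    ∃ t, 0 < t ∧ t < n ∧ (u t = c ∨ G.Adj c (u t)) := by
  by_contra! hfar
  have hne : ∀ t ≤ n, u t ≠ c := fun t ht h => by
    rcases Nat.eq_zero_or_pos t with rfl | ht0
    · exact G.loopless.irrefl c (h ▸ hc0)
    rcases ht.lt_or_eq with htn | rfl
    · exact (hfar t ht0 htn).1 h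
    · exact G.loopless.irrefl c (h ▸ hcn)
  obtain ⟨s, t, hst, htn, hs0, hadj⟩ :=
    hG.exists_chord (w := fun t => if t ≤ n then u t else c) (n := n + 1) (by omega)
    (fun s hs t ht hst => by
      simp only [Set.mem_Iic] at hs ht
      dsimp only at hst
      split_ifs at hst with h1 h2 h2
      · exact hu.injOn h1 h2 hst
      · exact absurd hst (hne s h1)
      · exact absurd hst.symm (hne t h2)
      · omega)
    (fun t ht => by
      rcases Nat.lt_succ_iff_lt_or_eq.mp ht with htn | rfl
      · simpa [htn.le, Nat.succ_le_of_lt htn] using hu.adj t htn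
      · simpa using hcn.symm)
    (by simpa using hc0)
  rw [if_pos (show s ≤ n by omega)] at hadj
  split_ifs at hadj with htn'
  · exact hu.not_adj s t hst htn' hadj
  · exact (hfar s (by omega) (by omega)).2 hadj.symm

theorem exists_interior_mem_of_ends_mem (hG : G.IsChordalGraph) {K : Set V} (hK : G.IsClique K)
    (hu : G.IsChordlessPath u n) (hn : 2 ≤ n) (h0 : u 0 ∈ K ∪ G.nbhdSet K)
    (hn' : u n ∈ K ∪ G.nbhdSet K) : ∃ t, 0 < t ∧ t < n ∧ u t ∈ K ∪ G.nbhdSet K := by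
  by_contra! hout
  have hfar : ∀ c ∈ K, ∀ t, 0 < t → t < n → u t ≠ c ∧ ¬ G.Adj c (u t) :=
    fun c hc t ht0 htn => ⟨fun h => hout t ht0 htn (Or.inl (h ▸ hc)),
      fun h => hout t ht0 htn (Or.inr ⟨c, hc, h⟩)⟩
  have hcommon : ∀ c ∈ K, G.Adj c (u 0) → ¬ G.Adj c (u n) := fun c hc hc0 hcn => by
    obtain ⟨t, ht0, htn, ht⟩ := hG.exists_interior_eq_or_adj hu hn hc0 hcn
    exact ht.elim (hfar c hc t ht0 htn).1 (hfar c hc t ht0 htn).2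
  have hends : ¬ G.Adj (u 0) (u n) := hu.not_adj 0 n (by omega) le_rfl
  rcases h0 with hx | ⟨a, ha, hax⟩ <;> rcases hn' with hy | ⟨b, hb, hby⟩
  · refine hends (hK hx hy fun h => ?_)
    have := hu.injOn (by simp) (by simp) h
    omega
  · exact hcommon b hb (hK hb hx (by rintro rfl; exact hends hby)) hby
  · exact hcommon a ha hax (hK ha hy (by rintro rfl; exact hends hax.symm))
  by_cases hay : G.Adj a (u n)
  · exact hcommon a ha hax hay
  by_cases hbx : G.Adj b (u 0)
  · exact hcommon b hb hbx hby
  have hv := hu.cons hax fun t ht0 htn => by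
    rcases htn.lt_or_eq with htn | rfl
    · exact hfar a ha t ht0 htn
    · exact ⟨by rintro h; exact hends (h ▸ hax).symm, hay⟩
  obtain ⟨t, ht0, htn, ht⟩ := hG.exists_interior_eq_or_adj hv (by omega) (c := b)
    (by simpa using hK hb ha (by rintro rfl; exact hbx hax)) (by simpa using hby)
  simp only [ht0.ne', if_false] at ht
  rcases Nat.eq_zero_or_pos (t - 1) with ht1 | ht1
  · rw [ht1] at ht
    exact ht.elim (by rintro rfl; exact hends hby) hbx
  · exact ht.elim (hfar b hb _ ht1 (by omega)).1 (hfar b hb _ ht1 (by omega)).2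

theorem mem_of_ends_mem (hG : G.IsChordalGraph) {K : Set V} (hK : G.IsClique K)
    (hu : G.IsChordlessPath u n) (h0 : u 0 ∈ K ∪ G.nbhdSet K) (hn : u n ∈ K ∪ G.nbhdSet K) :
    ∀ t ≤ n, u t ∈ K ∪ G.nbhdSet K := by
  induction n using Nat.strong_induction_on generalizing u with
  | _ n ih =>
    intro t ht
    by_cases hn2 : n < 2
    · obtain rfl | rfl : t = 0 ∨ t = n := by omega
      exacts [h0, hn]
    obtain ⟨m, hm0, hmn, hm⟩ := hG.exists_interior_mem_of_ends_mem hK hu (by omega) h0 hn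
    by_cases htm : t ≤ m
    · exact ih m hmn (hu.of_le hmn.le) h0 hm t htm
    · have := ih (n - m) (by omega) (hu.drop hmn.le) (by simpa using hm)
        (by simpa [Nat.add_sub_cancel' hmn.le] using hn) (t - m) (by omega)
      simpa [Nat.add_sub_cancel' (by omega : m ≤ t)] using this

end IsChordalGraph

end SimpleGraph

theorem chordless_path_in_clique_neighbourhood_general {V : Type*}
    (G1 : SimpleGraph V) (hchordal : G1.IsChordalGraph)
    (r1 : Set V) (hclique : G1.IsClique r1)
    (l : ℕ) (p : Fin (l + 1) → V) (hinj : Function.Injective p)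
    (hpath : ∀ i : Fin l, G1.Adj (p i.castSucc) (p i.succ))
    (hchordless : ∀ i j : Fin (l + 1), (i : ℕ) + 1 < (j : ℕ) → ¬ G1.Adj (p i) (p j))
    (hx : p 0 ∈ r1 ∪ G1.nbhdSet r1) (hy : p (Fin.last l) ∈ r1 ∪ G1.nbhdSet r1) :
    ∀ k : Fin (l + 1), p k ∈ r1 ∪ G1.nbhdSet r1 := by
  intro k
  have hu := SimpleGraph.IsChordlessPath.of_fin hinj hpath hchordless
  simpa [k.is_le] using hchordal.mem_of_ends_mem hclique hu (by simpa using hx)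
    (by simpa [Fin.last] using hy) k k.is_le

theorem chordless_path_in_clique_neighbourhood {V : Type*} [Fintype V] [DecidableEq V]
    (G1 : SimpleGraph V) (hchordal : G1.IsChordalGraph)
    (r1 : Set V) (hclique : G1.IsClique r1)
    (l : ℕ) (hl : 2 ≤ l) (p : Fin (l + 1) → V) (hinj : Function.Injective p)
    (hpath : ∀ i : Fin l, G1.Adj (p i.castSucc) (p i.succ))
    (hchordless : ∀ i j : Fin (l + 1), (i : ℕ) + 1 < (j : ℕ) → ¬ G1.Adj (p i) (p j))
    (hx : p 0 ∈ r1 ∪ G1.nbhdSet r1) (hy : p (Fin.last l) ∈ r1 ∪ G1.nbhdSet r1) :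
    ∀ k : Fin (l + 1), p k ∈ r1 ∪ G1.nbhdSet r1 :=
  chordless_path_in_clique_neighbourhood_general G1 hchordal r1 hclique l p hinj hpath hchordless hx
    hy
end
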